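/- Let λ > 0 and let Φ₁(y) = 1/(4π|y|) on ℝ³ \ {0}. Then for every y ≠ 0 the Vekua transform of Φ₁ equals Re(e^{iλ|y|}/(4π|y|)); that is, 1/(4π|y|) − (λ|y|/2) ∫₀¹ (1/(4π t |y|)) J₁(λ|y|√(1−t)) √(t/(1−t)) dt = cos(λ|y|)/(4π|y|). Equivalently, (λ/8π) ∫₀¹ J₁(λ|y|√(1−t)) dt/√(t(1−t)) = (1 − cos(λ|y|))/(4π|y|). -/

import Mathlib

open MeasureTheory intervalIntegral

/-- `t ^ (-1/2) = 1/√t` for `t > 0`. -/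
lemma rpow_half_eq (t : ℝ) (ht0 : 0 < t) : t ^ (-(1/2) : ℝ) = 1 / Real.sqrt t := by
  rw [Real.rpow_neg ht0.le, Real.sqrt_eq_rpow]; exact (one_div _).symm

lemma intInt_pow_div_sqrt (k : ℕ) :
    IntervalIntegrable (fun t : ℝ => (1 - t) ^ k / Real.sqrt t) volume 0 1 := by
  have h1 : IntervalIntegrable (fun t : ℝ => t ^ (-(1/2) : ℝ)) volume 0 1 :=
    intervalIntegrable_rpow' (by norm_num)
  have h2 := h1.mul_continuousOn
    (Continuous.continuousOn (by continuity : Continuous fun t : ℝ => (1 - t) ^ k))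
  apply h2.congr
  intro t ht
  rw [Set.uIoc_of_le (by norm_num : (0:ℝ) ≤ 1)] at ht
  simp only [rpow_half_eq t ht.1]
  ring

lemma base_case : ∫ t in (0:ℝ)..1, (1 - t) ^ 0 / Real.sqrt t = 2 := by
  have : ∀ t ∈ Set.uIcc (0:ℝ) 1, (1 - t) ^ 0 / Real.sqrt t = t ^ (-(1/2) : ℝ) := by
    intro t ht
    rcases eq_or_lt_of_le (Set.uIcc_of_le (by norm_num : (0:ℝ) ≤ 1) ▸ ht).1 with h | h
    · simp [← h, Real.zero_rpow]
    · rw [pow_zero, rpow_half_eq t h]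
  rw [intervalIntegral.integral_congr this, integral_rpow (Or.inl (by norm_num))]
  norm_num

lemma sqrt_mul_int (k : ℕ) :
    IntervalIntegrable (fun t : ℝ => Real.sqrt t * (1 - t) ^ k) volume 0 1 :=
  (Continuous.continuousOn (by continuity)).intervalIntegrable

lemma ibp_step (k : ℕ) :
    ∫ t in (0:ℝ)..1, (1 - t) ^ (k+1) / Real.sqrt t
      = (2*(k:ℝ)+2) * ∫ t in (0:ℝ)..1, Real.sqrt t * (1 - t) ^ k := by
  have hF : ContinuousOn (fun t : ℝ => 2 * Real.sqrt t * (1 - t) ^ (k+1)) (Set.Icc 0 1) :=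
    Continuous.continuousOn (by continuity)
  have hderiv : ∀ x ∈ Set.Ioo (0:ℝ) 1,
      HasDerivWithinAt (fun t : ℝ => 2 * Real.sqrt t * (1 - t) ^ (k+1))
      ((1 - x) ^ (k+1) / Real.sqrt x - (2*(k:ℝ)+2) * (Real.sqrt x * (1 - x) ^ k))
      (Set.Ioi x) x := by
    intro x hx
    have hs : Real.sqrt x ≠ 0 := (Real.sqrt_pos.2 hx.1).ne'
    have hsq : Real.sqrt x * Real.sqrt x = x := Real.mul_self_sqrt hx.1.le
    have h1 : HasDerivAt Real.sqrt (1 / (2 * Real.sqrt x)) x := Real.hasDerivAt_sqrt (ne_of_gt hx.1)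
    have h2 : HasDerivAt (fun t : ℝ => (1 - t) ^ (k+1)) (((k:ℝ)+1) * (1 - x) ^ k * (-1)) x := by
      have := ((hasDerivAt_id x).const_sub 1).fun_pow (k+1)
      simpa using this
    have h3 := (h1.const_mul 2).fun_mul h2
    refine h3.hasDerivWithinAt.congr_deriv ?_
    field_simp
    ring
  have hint : IntervalIntegrable (fun t : ℝ =>
      (1 - t) ^ (k+1) / Real.sqrt t - (2*(k:ℝ)+2) * (Real.sqrt t * (1 - t) ^ k)) volume 0 1 :=
    (intInt_pow_div_sqrt (k+1)).sub ((sqrt_mul_int k).const_mul _)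
  have h0 := integral_eq_sub_of_hasDeriv_right_of_le (by norm_num) hF hderiv hint
  rw [integral_sub (intInt_pow_div_sqrt (k+1)) ((sqrt_mul_int k).const_mul _),
    intervalIntegral.integral_const_mul] at h0
  simp [Real.sqrt_zero, Real.sqrt_one] at h0
  linarith [h0]

lemma sqrt_mul_eq (k : ℕ) :
    ∫ t in (0:ℝ)..1, Real.sqrt t * (1 - t) ^ k
      = (∫ t in (0:ℝ)..1, (1 - t) ^ k / Real.sqrt t)
        - ∫ t in (0:ℝ)..1, (1 - t) ^ (k+1) / Real.sqrt t := by
  rw [← intervalIntegral.integral_sub (intInt_pow_div_sqrt k) (intInt_pow_div_sqrt (k+1))]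
  apply intervalIntegral.integral_congr
  intro t _
  show Real.sqrt t * (1 - t) ^ k = (1 - t) ^ k / Real.sqrt t - (1 - t) ^ (k+1) / Real.sqrt t
  rw [div_sub_div_same]
  have h : (1 - t) ^ k - (1 - t) ^ (k+1) = (1 - t) ^ k * t := by ring
  rw [h, mul_div_assoc, Real.div_sqrt, mul_comm]

/-- The Beta-type integral `∫₀¹ (1-t)^k/√t dt = 4^{k+1} k! (k+1)!/(2k+2)!`. -/
lemma beta_int (k : ℕ) :
    ∫ t in (0:ℝ)..1, (1 - t) ^ k / Real.sqrt t
      = 4 ^ (k+1) * (Nat.factorial k : ℝ) * (Nat.factorial (k+1)) / (Nat.factorial (2*k+2)) := by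
  induction k with
  | zero => rw [base_case]; norm_num [Nat.factorial]
  | succ n ih =>
    have h1 := ibp_step n
    rw [sqrt_mul_eq n, ih] at h1
    have h3 : (2*(n:ℝ)+3) ≠ 0 := by positivity
    have h2 : (2*(n:ℝ)+3) * ∫ t in (0:ℝ)..1, (1 - t) ^ (n+1) / Real.sqrt t
        = (2*(n:ℝ)+2) * (4 ^ (n+1) * (Nat.factorial n : ℝ) * (Nat.factorial (n+1)) / (Nat.factorial (2*n+2))) := by
      linarith [h1]
    have hI : ∫ t in (0:ℝ)..1, (1 - t) ^ (n+1) / Real.sqrt t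
        = (2*(n:ℝ)+2) * (4 ^ (n+1) * (Nat.factorial n : ℝ) * (Nat.factorial (n+1)) / (Nat.factorial (2*n+2))) / (2*(n:ℝ)+3) := by
      rw [eq_div_iff h3]; linarith [h2]
    have hf1 : (Nat.factorial (2*(n+1)+2) : ℝ) = (2*(n:ℝ)+4) * ((2*(n:ℝ)+3) * (Nat.factorial (2*n+2))) := by
      have e1 : 2*(n+1)+2 = (2*n+3) + 1 := by ring
      have e2 : 2*n+3 = (2*n+2) + 1 := by ring
      rw [e1, Nat.factorial_succ, e2, Nat.factorial_succ]
      push_cast; ring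
    have hf2 : (Nat.factorial (n+1+1) : ℝ) = ((n:ℝ)+2) * (Nat.factorial (n+1)) := by
      rw [Nat.factorial_succ]; push_cast; ring
    have hfn : (Nat.factorial (n+1) : ℝ) = ((n:ℝ)+1) * (Nat.factorial n) := by
      rw [Nat.factorial_succ]; push_cast; ring
    have hfpos : (Nat.factorial (2*n+2) : ℝ) ≠ 0 := by positivity
    have hfnn : (Nat.factorial n : ℝ) ≠ 0 := by positivity
    rw [hI, hf1, hf2, hfn]
    field_simp
    ring

lemma four_pow (r : ℝ) (k : ℕ) : (r/2)^(2*k+1) * 4^(k+1) = 2 * r^(2*k+1) := by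
  have h4 : (4:ℝ)^(k+1) = 2^(2*k+2) := by
    rw [show (4:ℝ) = 2^2 by norm_num, ← pow_mul]
    ring_nf
  rw [h4, div_pow, pow_succ (2:ℝ) (2*k+1)]
  field_simp

lemma summable_aux (r : ℝ) (hr : 0 < r) :
    Summable (fun k : ℕ => 2 * r^(2*k+1) / (Nat.factorial (2*k+2) : ℝ)) := by
  have hinj : Function.Injective (fun k : ℕ => 2*k+2) := by intro a b h; dsimp at h; omega
  have h1 := (Real.summable_pow_div_factorial r).comp_injective hinj
  have h2 := h1.mul_left (2/r)
  apply h2.congr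
  intro k
  show 2/r * (r^(2*k+2) / (Nat.factorial (2*k+2) : ℝ)) = _
  rw [pow_succ]
  field_simp

lemma cos_series (r : ℝ) :
    ∑' k : ℕ, ((-1):ℝ)^k * r^(2*k+2) / (Nat.factorial (2*k+2)) = 1 - Real.cos r := by
  set g : ℕ → ℝ := fun n => ((-1):ℝ)^n * r^(2*n) / (Nat.factorial (2*n)) with hgdef
  have hinj : Function.Injective (fun k : ℕ => 2*k) := by intro a b h; dsimp at h; omega
  have hg : Summable g := by
    apply Summable.of_norm
    have h1 := (Real.summable_pow_div_factorial |r|).comp_injective hinj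
    apply h1.congr
    intro n
    show |r|^(2*n) / (Nat.factorial (2*n) : ℝ) = ‖g n‖
    rw [hgdef]
    simp [abs_mul, abs_div, abs_pow, Nat.abs_cast]
  have h0 : ∑' n, g n = g 0 + ∑' n, g (n+1) := Summable.tsum_eq_zero_add hg
  have hcos : Real.cos r = ∑' n, g n := Real.cos_eq_tsum r
  have hg0 : g 0 = 1 := by simp [hgdef]
  have hshift : ∀ n : ℕ, g (n+1) = -(((-1):ℝ)^n * r^(2*n+2) / (Nat.factorial (2*n+2))) := by
    intro n
    rw [hgdef]
    have e : 2*(n+1) = 2*n+2 := by ring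
    simp only [e, pow_succ]
    ring
  have hsum : ∑' n, g (n+1) = -∑' n : ℕ, ((-1):ℝ)^n * r^(2*n+2) / (Nat.factorial (2*n+2)) := by
    rw [← tsum_neg]
    exact tsum_congr hshift
  rw [hsum, hg0] at h0
  rw [hcos, h0]
  ring

/-- The Bessel function of the first kind of order 1,
`J₁(x) = ∑ₖ (−1)ᵏ/(k!(k+1)!) (x/2)^{2k+1}`. -/
noncomputable def J1 (x : ℝ) : ℝ :=
  ∑' k : ℕ, (-1 : ℝ) ^ k / (Nat.factorial k * Nat.factorial (k + 1)) * (x / 2) ^ (2 * k + 1)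

/-- The coefficient of `(1-t)^k/√t` in the expansion of `J1 (r √(1-t))/√(t(1-t))`. -/
noncomputable def cc (r : ℝ) (k : ℕ) : ℝ :=
  (-1 : ℝ) ^ k / (Nat.factorial k * Nat.factorial (k + 1)) * (r / 2) ^ (2 * k + 1)

/-- The key integral evaluation. -/
lemma key (r : ℝ) (hr : 0 < r) :
    ∫ t in (0:ℝ)..1, J1 (r * Real.sqrt (1 - t)) / Real.sqrt (t * (1 - t))
      = 2 * (1 - Real.cos r) / r := by
  have hrne : r ≠ 0 := hr.ne'
  have hpt : ∀ t ∈ Set.Ioo (0:ℝ) 1,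
      J1 (r * Real.sqrt (1 - t)) / Real.sqrt (t * (1 - t))
        = ∑' k : ℕ, cc r k * ((1 - t) ^ k / Real.sqrt t) := by
    intro t ht
    have ht0 : 0 < t := ht.1
    have ht1 : (0:ℝ) < 1 - t := by linarith [ht.2]
    have hst : Real.sqrt t ≠ 0 := (Real.sqrt_pos.2 ht0).ne'
    have hs1 : Real.sqrt (1 - t) ≠ 0 := (Real.sqrt_pos.2 ht1).ne'
    rw [J1, ← tsum_div_const]
    apply tsum_congr
    intro k
    rw [Real.sqrt_mul ht0.le]
    have hsp : Real.sqrt (1 - t) ^ (2*k+1) = (1 - t) ^ k * Real.sqrt (1 - t) := by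
      rw [pow_succ, pow_mul, Real.sq_sqrt ht1.le]
    have he : r * Real.sqrt (1 - t) / 2 = (r/2) * Real.sqrt (1 - t) := by ring
    rw [he, mul_pow, hsp, cc]
    field_simp
  rw [intervalIntegral.integral_of_le zero_le_one, integral_Ioc_eq_integral_Ioo,
    setIntegral_congr_fun measurableSet_Ioo hpt]
  have hint : ∀ k : ℕ, IntegrableOn (fun t : ℝ => cc r k * ((1 - t) ^ k / Real.sqrt t))
      (Set.Ioo (0:ℝ) 1) volume := by
    intro k
    apply Integrable.const_mul
    exact (((intervalIntegrable_iff_integrableOn_Ioc_of_le zero_le_one).1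
      (intInt_pow_div_sqrt k)).mono_set Set.Ioo_subset_Ioc_self)
  have hmeas : ∀ k : ℕ, AEStronglyMeasurable (fun t : ℝ => cc r k * ((1 - t) ^ k / Real.sqrt t))
      (volume.restrict (Set.Ioo (0:ℝ) 1)) := fun k => (hint k).aestronglyMeasurable
  have hBk : ∀ k : ℕ, ∫ t in Set.Ioo (0:ℝ) 1, ((1 - t) ^ k / Real.sqrt t)
      = 4 ^ (k+1) * (Nat.factorial k : ℝ) * (Nat.factorial (k+1)) / (Nat.factorial (2*k+2)) := by
    intro k
    rw [← integral_Ioc_eq_integral_Ioo, ← intervalIntegral.integral_of_le zero_le_one]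
    exact beta_int k
  have hval : ∀ k : ℕ, ∫ t in Set.Ioo (0:ℝ) 1, cc r k * ((1 - t) ^ k / Real.sqrt t)
      = (2/r) * (((-1):ℝ)^k * r^(2*k+2) / (Nat.factorial (2*k+2))) := by
    intro k
    rw [MeasureTheory.integral_const_mul, hBk k, cc]
    have h4 := four_pow r k
    have hk1 : (Nat.factorial k : ℝ) ≠ 0 := by positivity
    have hk2 : (Nat.factorial (k+1) : ℝ) ≠ 0 := by positivity
    have hk3 : (Nat.factorial (2*k+2) : ℝ) ≠ 0 := by positivity
    have h2ne : ((2:ℝ))^(2*k+1) ≠ 0 := by positivity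
    have h4' : r^(2*k+1) * 4^(k+1) = 2 * r^(2*k+1) * 2^(2*k+1) := by
      rw [div_pow] at h4
      field_simp at h4
      linear_combination r^(2*k+1) * h4
    rw [div_pow]
    field_simp
    have h42 : (2:ℝ)^(2*k) = 4^k := by rw [pow_mul]; norm_num
    linear_combination ((-1:ℝ)^k * r * (Nat.factorial k : ℝ) * (Nat.factorial (k+1)) * (Nat.factorial (2*k+2))) * h4'
      + (r^(2*k+2) * ((Nat.factorial k : ℝ) * (Nat.factorial (k+1)) * (Nat.factorial (2*k+2)) * (-1:ℝ)^k - 1)) * 4 * h42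
  have hlin : ∀ k : ℕ, ∫⁻ t in Set.Ioo (0:ℝ) 1, ‖cc r k * ((1 - t) ^ k / Real.sqrt t)‖₊
      = ENNReal.ofReal (|cc r k| * (4 ^ (k+1) * (Nat.factorial k : ℝ) * (Nat.factorial (k+1)) / (Nat.factorial (2*k+2)))) := by
    intro k
    simp_rw [← enorm_eq_nnnorm]
    rw [← ofReal_integral_norm_eq_lintegral_enorm (hint k)]
    congr 1
    have hn : ∀ t ∈ Set.Ioo (0:ℝ) 1, ‖cc r k * ((1 - t) ^ k / Real.sqrt t)‖
        = |cc r k| * ((1 - t) ^ k / Real.sqrt t) := by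
      intro t ht
      have h1 : (0:ℝ) ≤ (1 - t) ^ k / Real.sqrt t := by
        apply div_nonneg (pow_nonneg (by linarith [ht.2]) k) (Real.sqrt_nonneg t)
      rw [Real.norm_eq_abs, abs_mul, abs_of_nonneg h1]
    rw [setIntegral_congr_fun measurableSet_Ioo hn, MeasureTheory.integral_const_mul, hBk k]
  have habs : ∀ k : ℕ, |cc r k| * (4 ^ (k+1) * (Nat.factorial k : ℝ) * (Nat.factorial (k+1)) / (Nat.factorial (2*k+2)))
      = 2 * r^(2*k+1) / (Nat.factorial (2*k+2)) := by
    intro k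
    have hcc : |cc r k| = (r/2)^(2*k+1) / (Nat.factorial k * Nat.factorial (k+1)) := by
      rw [cc, abs_mul, abs_div, abs_pow, abs_neg, abs_one, one_pow, abs_pow]
      rw [abs_of_pos (by positivity : (0:ℝ) < r/2)]
      rw [abs_of_pos (by positivity : (0:ℝ) < (Nat.factorial k : ℝ) * Nat.factorial (k+1))]
      ring
    rw [hcc]
    have h4 := four_pow r k
    have hk1 : (Nat.factorial k : ℝ) ≠ 0 := by positivity
    have hk2 : (Nat.factorial (k+1) : ℝ) ≠ 0 := by positivity
    have hk3 : (Nat.factorial (2*k+2) : ℝ) ≠ 0 := by positivity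
    have h2ne : ((2:ℝ))^(2*k+1) ≠ 0 := by positivity
    have h4' : r^(2*k+1) * 4^(k+1) = 2 * r^(2*k+1) * 2^(2*k+1) := by
      rw [div_pow] at h4
      field_simp at h4
      linear_combination r^(2*k+1) * h4
    rw [div_pow]
    field_simp
    have h42 : (2:ℝ)^(2*k) = 4^k := by rw [pow_mul]; norm_num
    linear_combination (((Nat.factorial k : ℝ)) * (Nat.factorial (k+1)) * (Nat.factorial (2*k+2))) * h4'
      + ((Nat.factorial k : ℝ) * (Nat.factorial (k+1)) * (Nat.factorial (2*k+2)) * r^(2*k+1) - 1) * 4 * h42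
  have hne : (∑' k : ℕ, ∫⁻ t in Set.Ioo (0:ℝ) 1, ‖cc r k * ((1 - t) ^ k / Real.sqrt t)‖₊) ≠ ⊤ := by
    have e1 : (∑' k : ℕ, ∫⁻ t in Set.Ioo (0:ℝ) 1, ‖cc r k * ((1 - t) ^ k / Real.sqrt t)‖₊)
        = ∑' k : ℕ, ENNReal.ofReal (2 * r^(2*k+1) / (Nat.factorial (2*k+2))) := by
      apply tsum_congr
      intro k
      rw [hlin k, habs k]
    rw [e1, ← ENNReal.ofReal_tsum_of_nonneg (fun k => by positivity) (summable_aux r hr)]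
    exact ENNReal.ofReal_ne_top
  rw [MeasureTheory.integral_tsum hmeas hne]
  have hfin : ∑' k : ℕ, ∫ t in Set.Ioo (0:ℝ) 1, cc r k * ((1 - t) ^ k / Real.sqrt t)
      = (2/r) * ∑' k : ℕ, (((-1):ℝ)^k * r^(2*k+2) / (Nat.factorial (2*k+2))) := by
    rw [← tsum_mul_left]
    exact tsum_congr hval
  rw [hfin, cos_series]
  ring

/-- for `λ > 0` and `Φ₁(y) = 1/(4π|y|)` on `ℝ³ \ {0}`, the Vekua transform
`T_λ Φ₁(y) = Φ₁(y) − (λ|y|/2)∫₀¹ Φ₁(ty) J₁(λ|y|√(1−t)) √(t/(1−t)) dt`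
equals `Re(e^{iλ|y|}/(4π|y|)) = cos(λ|y|)/(4π|y|)`; equivalently,
`(λ/(8π))∫₀¹ J₁(λ|y|√(1−t)) dt/√(t(1−t)) = (1 − cos(λ|y|))/(4π|y|)`. -/
theorem stmt_15 (lam : ℝ) (hlam : 0 < lam) (y : EuclideanSpace ℝ (Fin 3)) (hy : y ≠ 0) :
    (1 / (4 * Real.pi * ‖y‖) - (lam * ‖y‖ / 2) *
        ∫ t in (0 : ℝ)..1, (1 / (4 * Real.pi * (t * ‖y‖))) *
          J1 (lam * ‖y‖ * Real.sqrt (1 - t)) * Real.sqrt (t / (1 - t))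
      = Real.cos (lam * ‖y‖) / (4 * Real.pi * ‖y‖)) ∧
    (lam / (8 * Real.pi)) *
        ∫ t in (0 : ℝ)..1, J1 (lam * ‖y‖ * Real.sqrt (1 - t)) / Real.sqrt (t * (1 - t))
      = (1 - Real.cos (lam * ‖y‖)) / (4 * Real.pi * ‖y‖) := by
  have hy0 : 0 < ‖y‖ := norm_pos_iff.2 hy
  have hr : 0 < lam * ‖y‖ := mul_pos hlam hy0
  have hpi : Real.pi ≠ 0 := Real.pi_ne_zero
  have hpip : 0 < Real.pi := Real.pi_pos
  have hI := key (lam * ‖y‖) hr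
  constructor
  · have heq : (∫ t in (0 : ℝ)..1, (1 / (4 * Real.pi * (t * ‖y‖))) *
          J1 (lam * ‖y‖ * Real.sqrt (1 - t)) * Real.sqrt (t / (1 - t)))
        = (1/(4*Real.pi*‖y‖)) * ∫ t in (0:ℝ)..1,
            J1 (lam * ‖y‖ * Real.sqrt (1 - t)) / Real.sqrt (t * (1 - t)) := by
      rw [intervalIntegral.integral_of_le zero_le_one, integral_Ioc_eq_integral_Ioo,
          intervalIntegral.integral_of_le zero_le_one, integral_Ioc_eq_integral_Ioo,
          ← MeasureTheory.integral_const_mul]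
      apply setIntegral_congr_fun measurableSet_Ioo
      intro t ht
      have ht0 : (0:ℝ) < t := ht.1
      have ht1 : (0:ℝ) < 1 - t := by linarith [ht.2]
      have hst : Real.sqrt t ≠ 0 := (Real.sqrt_pos.2 ht0).ne'
      have hs1 : Real.sqrt (1-t) ≠ 0 := (Real.sqrt_pos.2 ht1).ne'
      have hmul : Real.sqrt t * Real.sqrt t = t := Real.mul_self_sqrt ht0.le
      show (1 / (4 * Real.pi * (t * ‖y‖))) * J1 (lam * ‖y‖ * Real.sqrt (1-t)) * Real.sqrt (t/(1-t))
        = (1/(4*Real.pi*‖y‖)) * (J1 (lam * ‖y‖ * Real.sqrt (1-t)) / Real.sqrt (t*(1-t)))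
      rw [Real.sqrt_div ht0.le, Real.sqrt_mul ht0.le]
      field_simp
      linear_combination (J1 (‖y‖ * lam * Real.sqrt (1-t))) * hmul
    rw [heq, hI]
    field_simp
    ring
  · rw [hI]
    field_simp
    ring
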